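/- Let A and B be n×n complex matrices. Then for every index j, s_j(AB + BA) ≤ s_j( (AᴴA + BᴴB) ⊕ (AAᴴ + BBᴴ) ), where the right-hand matrix is the 2n×2n block diagonal matrix with diagonal blocks AᴴA + BᴴB and AAᴴ + BBᴴ. -/

import Mathlib

open Matrix
open scoped ComplexOrder

/-- `singularValues X j` is the `(j+1)`-th largest singular value of `X`, i.e. the
decreasingly ordered square roots of the eigenvalues of `Xᴴ * X`. -/
noncomputable def singularValues {m : ℕ} (X : Matrix (Fin m) (Fin m) ℂ) : Fin m → ℝ :=
  fun j => Real.sqrt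
    ((Matrix.isHermitian_conjTranspose_mul_self X).eigenvalues
      (Tuple.sort (Matrix.isHermitian_conjTranspose_mul_self X).eigenvalues j.rev))

/-- `matAbs X = |X|` is the positive semidefinite square root of `Xᴴ * X`. -/
noncomputable def matAbs {m : ℕ} (X : Matrix (Fin m) (Fin m) ℂ) : Matrix (Fin m) (Fin m) ℂ :=
  (Matrix.posSemidef_conjTranspose_mul_self X).1.eigenvectorUnitary.1 *
    Matrix.diagonal ((↑) ∘ (√·) ∘ (Matrix.posSemidef_conjTranspose_mul_self X).1.eigenvalues) *
    (star (Matrix.posSemidef_conjTranspose_mul_self X).1.eigenvectorUnitary : Matrix (Fin m) (Fin m) ℂ)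

/-- `dsum X Y = X ⊕ Y` is the block diagonal matrix with diagonal blocks `X` and `Y`. -/
noncomputable def dsum {m : ℕ} (X Y : Matrix (Fin m) (Fin m) ℂ) :
    Matrix (Fin (m + m)) (Fin (m + m)) ℂ :=
  Matrix.reindex finSumFinEquiv finSumFinEquiv (Matrix.fromBlocks X 0 0 Y)

/-- `matPosPart X = X⁺ = (|X| + X)/2`. -/
noncomputable def matPosPart {m : ℕ} (X : Matrix (Fin m) (Fin m) ℂ) : Matrix (Fin m) (Fin m) ℂ :=
  (2 : ℂ)⁻¹ • (matAbs X + X)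

/-- `matNegPart X = X⁻ = (|X| - X)/2`. -/
noncomputable def matNegPart {m : ℕ} (X : Matrix (Fin m) (Fin m) ℂ) : Matrix (Fin m) (Fin m) ℂ :=
  (2 : ℂ)⁻¹ • (matAbs X - X)

/-!
Put `K = AB + BA` and `M = (AᴴA + BᴴB) ⊕ (AAᴴ + BBᴴ)`. The Hermitian dilation
`H = [[0, Kᴴ], [K, 0]]` satisfies `M - H = CᴴC` with `C = [[A, -Bᴴ], [B, -Aᴴ]]`, so `H ≤ M`.
If `KᴴK v = σ² v` with `σ > 0`, then `(σ v, K v)` is an eigenvector of `H` with eigenvalue `σ`,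
and these vectors are orthogonal for orthogonal `v`. On the span `V` of those coming from the
`j + 1` largest eigenvalues of `KᴴK` we get `s_j(K) ‖x‖² ≤ ⟪x, H x⟫ ≤ ⟪x, M x⟫ ≤ ‖x‖ ‖M x‖`,
hence `s_j(K)² ‖x‖² ≤ ⟪x, MᴴM x⟫`; as `dim V = j + 1`, the Courant–Fischer principle for `MᴴM`
gives `s_j(K)² ≤ s_j(M)²`.
-/

open Module Finset RCLike
open scoped InnerProductSpace

section OrthogonalFamily

variable {𝕜 E ι : Type*} [RCLike 𝕜] [NormedAddCommGroup E] [InnerProductSpace 𝕜 E] [Fintype ι]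
  {f : ι → E} {T : E →ₗ[𝕜] E} {d : ι → ℝ}

theorem re_inner_sum_smul_map_sum_smul (hf : Pairwise fun i l => ⟪f i, f l⟫_𝕜 = 0)
    (hT : ∀ i, T (f i) = (d i : 𝕜) • f i) (a : ι → 𝕜) :
    re ⟪∑ i, a i • f i, T (∑ i, a i • f i)⟫_𝕜 = ∑ i, d i * ‖a i • f i‖ ^ 2 := by
  simp only [map_sum, map_smul, hT, sum_inner, inner_sum, inner_smul_left, inner_smul_right]
  refine Finset.sum_congr rfl fun i _ => ?_
  rw [Finset.sum_eq_single_of_mem i (mem_univ i) fun l _ hl => by simp [hf hl]]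
  rw [inner_self_eq_norm_sq_to_K, norm_smul, mul_left_comm, ← mul_assoc (a i), RCLike.mul_conj]
  norm_cast
  ring

theorem norm_sum_smul_sq (hf : Pairwise fun i l => ⟪f i, f l⟫_𝕜 = 0) (a : ι → 𝕜) :
    ‖∑ i, a i • f i‖ ^ 2 = ∑ i, ‖a i • f i‖ ^ 2 := by
  simpa [inner_self_eq_norm_sq] using
    re_inner_sum_smul_map_sum_smul (T := LinearMap.id) (d := 1) hf (by simp) a

theorem le_re_inner_map_self_of_mem_span (hf : Pairwise fun i l => ⟪f i, f l⟫_𝕜 = 0)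
    (hT : ∀ i, T (f i) = (d i : 𝕜) • f i) {c : ℝ} (hc : ∀ i, c ≤ d i) {x : E}
    (hx : x ∈ Submodule.span 𝕜 (Set.range f)) : c * ‖x‖ ^ 2 ≤ re ⟪x, T x⟫_𝕜 := by
  obtain ⟨a, rfl⟩ := (Submodule.mem_span_range_iff_exists_fun 𝕜).mp hx
  rw [re_inner_sum_smul_map_sum_smul hf hT, norm_sum_smul_sq hf, mul_sum]
  gcongr with i
  exact hc i

theorem re_inner_map_self_le_of_mem_span (hf : Pairwise fun i l => ⟪f i, f l⟫_𝕜 = 0)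
    (hT : ∀ i, T (f i) = (d i : 𝕜) • f i) {c : ℝ} (hc : ∀ i, d i ≤ c) {x : E}
    (hx : x ∈ Submodule.span 𝕜 (Set.range f)) : re ⟪x, T x⟫_𝕜 ≤ c * ‖x‖ ^ 2 := by
  obtain ⟨a, rfl⟩ := (Submodule.mem_span_range_iff_exists_fun 𝕜).mp hx
  rw [re_inner_sum_smul_map_sum_smul hf hT, norm_sum_smul_sq hf, mul_sum]
  gcongr with i
  exact hc i

end OrthogonalFamily

theorem sq_mul_norm_sq_le_norm_sq_of_mul_norm_sq_le_re_inner {𝕜 E : Type*} [RCLike 𝕜]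
    [NormedAddCommGroup E] [InnerProductSpace 𝕜 E] {x y : E} {s : ℝ} (hs : 0 ≤ s)
    (h : s * ‖x‖ ^ 2 ≤ re ⟪x, y⟫_𝕜) : s ^ 2 * ‖x‖ ^ 2 ≤ ‖y‖ ^ 2 := by
  have hxy : s * ‖x‖ ^ 2 ≤ ‖x‖ * ‖y‖ := h.trans (re_inner_le_norm x y)
  rcases (norm_nonneg x).eq_or_lt with hx | hx
  · simp [← hx]
  · have : s * ‖x‖ ≤ ‖y‖ := le_of_mul_le_mul_left (by nlinarith) hx
    nlinarith [mul_nonneg hs hx.le]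

theorem Submodule.inf_ne_bot_of_finrank_lt_add {K V : Type*} [DivisionRing K] [AddCommGroup V]
    [Module K V] [FiniteDimensional K V] {U W : Submodule K V}
    (h : finrank K V < finrank K U + finrank K W) : U ⊓ W ≠ ⊥ := by
  intro hbot
  have := Submodule.finrank_sup_add_finrank_inf_eq U W
  rw [hbot, finrank_bot, add_zero] at this
  have := (U ⊔ W).finrank_le
  omega

namespace Tuple

variable {α : Type*} [LinearOrder α] {m : ℕ} (f : Fin m → α) (i : Fin m)

theorem le_card_filter_le_sort : i.val + 1 ≤ #{p | f p ≤ f (sort f i)} := by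
  rw [← Fin.card_Iic]
  refine card_le_card_of_injOn (sort f) (fun p hp => ?_) (sort f).injective.injOn
  simpa using monotone_sort f (mem_Iic.mp hp)

theorem le_card_filter_sort_le : m - i.val ≤ #{p | f (sort f i) ≤ f p} := by
  rw [← Fin.card_Ici]
  refine card_le_card_of_injOn (sort f) (fun p hp => ?_) (sort f).injective.injOn
  simpa using monotone_sort f (mem_Ici.mp hp)

end Tuple

namespace Matrix.IsHermitian

variable {𝕜 : Type*} [RCLike 𝕜] {m : ℕ} {G : Matrix (Fin m) (Fin m) 𝕜} (hG : G.IsHermitian)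

/-- The `k`-th largest eigenvalue, counting from `0`. -/
noncomputable def eigenvaluesDesc (k : Fin m) : ℝ :=
  hG.eigenvalues (Tuple.sort hG.eigenvalues k.rev)

theorem le_card_filter_eigenvaluesDesc_le (k : Fin m) :
    k.val + 1 ≤ #{p | hG.eigenvaluesDesc k ≤ hG.eigenvalues p} := by
  have := Tuple.le_card_filter_sort_le hG.eigenvalues k.rev
  rw [Fin.val_rev] at this
  unfold eigenvaluesDesc
  omega

theorem le_card_filter_le_eigenvaluesDesc (k : Fin m) :
    m - k.val ≤ #{p | hG.eigenvalues p ≤ hG.eigenvaluesDesc k} := by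
  have := Tuple.le_card_filter_le_sort hG.eigenvalues k.rev
  rw [Fin.val_rev] at this
  unfold eigenvaluesDesc
  omega

theorem toEuclideanLin_eigenvectorBasis (p : Fin m) :
    toEuclideanLin G (hG.eigenvectorBasis p) = (hG.eigenvalues p : 𝕜) • hG.eigenvectorBasis p := by
  rw [toLpLin_apply, hG.mulVec_eigenvectorBasis, RCLike.real_smul_eq_coe_smul (K := 𝕜)]
  rfl

theorem le_eigenvaluesDesc_of_le_re_inner (k : Fin m)
    {V : Submodule 𝕜 (EuclideanSpace 𝕜 (Fin m))} (hV : k.val + 1 ≤ finrank 𝕜 V) {c : ℝ}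
    (hc : ∀ x ∈ V, c * ‖x‖ ^ 2 ≤ re ⟪x, toEuclideanLin G x⟫_𝕜) : c ≤ hG.eigenvaluesDesc k := by
  let S : Finset (Fin m) := {p | hG.eigenvalues p ≤ hG.eigenvaluesDesc k}
  let e : S → EuclideanSpace 𝕜 (Fin m) := fun p => hG.eigenvectorBasis p
  have he : Orthonormal 𝕜 e := hG.eigenvectorBasis.orthonormal.comp _ Subtype.val_injective
  have hW : finrank 𝕜 (Submodule.span 𝕜 (Set.range e)) = #S := by
    rw [finrank_span_eq_card he.linearIndependent, Fintype.card_coe]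
  have hVW : V ⊓ Submodule.span 𝕜 (Set.range e) ≠ ⊥ := by
    refine Submodule.inf_ne_bot_of_finrank_lt_add ?_
    have : m - k.val ≤ #S := hG.le_card_filter_le_eigenvaluesDesc k
    rw [finrank_euclideanSpace_fin, hW]
    omega
  obtain ⟨x, hx, hx0⟩ := Submodule.exists_mem_ne_zero_of_ne_bot hVW
  rw [Submodule.mem_inf] at hx
  have hupper := re_inner_map_self_le_of_mem_span he.2
    (fun p => hG.toEuclideanLin_eigenvectorBasis p) (fun p => (mem_filter.mp p.2).2) hx.2
  have hx2 : 0 < ‖x‖ ^ 2 := by positivity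
  exact le_of_mul_le_mul_right ((hc x hx.1).trans hupper) hx2

end Matrix.IsHermitian

theorem Matrix.reindex_fromBlocks_mulVec_append {R : Type*} [NonUnitalNonAssocSemiring R]
    {m n m' n' : ℕ} (X : Matrix (Fin m) (Fin m') R) (Z : Matrix (Fin m) (Fin n') R)
    (W : Matrix (Fin n) (Fin m') R) (Y : Matrix (Fin n) (Fin n') R) (a : Fin m' → R)
    (b : Fin n' → R) :
    reindex finSumFinEquiv finSumFinEquiv (fromBlocks X Z W Y) *ᵥ Fin.append a b =
      Fin.append (X *ᵥ a + Z *ᵥ b) (W *ᵥ a + Y *ᵥ b) := by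
  have h {k l : ℕ} (u : Fin k → R) (v : Fin l → R) :
      Fin.append u v ∘ finSumFinEquiv = Sum.elim u v :=
    Fin.append_comp_sumElim
  rw [reindex_apply, submatrix_mulVec_equiv, Equiv.symm_symm, h, fromBlocks_mulVec, ← h,
    Function.comp_assoc, Equiv.self_comp_symm, Function.comp_id]
  rfl

theorem EuclideanSpace.inner_toLp_append {𝕜 : Type*} [RCLike 𝕜] {m n : ℕ}
    (x x' : EuclideanSpace 𝕜 (Fin m)) (y y' : EuclideanSpace 𝕜 (Fin n)) :
    ⟪(WithLp.toLp 2 (Fin.append x.ofLp y.ofLp) : EuclideanSpace 𝕜 (Fin (m + n))),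
      WithLp.toLp 2 (Fin.append x'.ofLp y'.ofLp)⟫_𝕜 = ⟪x, x'⟫_𝕜 + ⟪y, y'⟫_𝕜 := by
  simp [EuclideanSpace.inner_eq_star_dotProduct, dotProduct, Fin.sum_univ_add]

theorem Matrix.inner_toEuclideanLin_conjTranspose_mul_self {𝕜 : Type*} [RCLike 𝕜] {m n : Type*}
    [Fintype m] [Fintype n] [DecidableEq m] [DecidableEq n] (K : Matrix m n 𝕜)
    (x y : EuclideanSpace 𝕜 n) :
    ⟪x, toEuclideanLin (Kᴴ * K) y⟫_𝕜 = ⟪toEuclideanLin K x, toEuclideanLin K y⟫_𝕜 := by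
  rw [toLpLin_mul_same, LinearMap.comp_apply, toEuclideanLin_conjTranspose_eq_adjoint,
    LinearMap.adjoint_inner_right]

namespace Matrix

def hermitianDilation {R : Type*} [Star R] [Zero R] {m n : ℕ} (K : Matrix (Fin m) (Fin n) R) :
    Matrix (Fin (n + m)) (Fin (n + m)) R :=
  reindex finSumFinEquiv finSumFinEquiv (fromBlocks 0 Kᴴ K 0)

theorem hermitianDilation_mulVec_append {R : Type*} [CommRing R] [StarRing R] {m n : ℕ}
    (K : Matrix (Fin m) (Fin n) R) {v : Fin n → R} {σ : R} (hv : (Kᴴ * K) *ᵥ v = σ ^ 2 • v) :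
    hermitianDilation K *ᵥ Fin.append (σ • v) (K *ᵥ v) = σ • Fin.append (σ • v) (K *ᵥ v) := by
  rw [hermitianDilation, reindex_fromBlocks_mulVec_append, zero_mulVec, zero_mulVec, zero_add,
    add_zero, mulVec_mulVec, hv, mulVec_smul]
  ext i
  refine Fin.addCases (fun i => ?_) (fun i => ?_) i <;> simp [sq, mul_smul]

variable {𝕜 : Type*} [RCLike 𝕜] {m n : ℕ}

theorem exists_submodule_le_re_inner_hermitianDilation_of_orthonormal {ι : Type*} [Fintype ι]
    (K : Matrix (Fin m) (Fin n) 𝕜) {v : ι → EuclideanSpace 𝕜 (Fin n)} (hv : Orthonormal 𝕜 v)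
    {σ : ι → ℝ} (hσ : ∀ i, 0 < σ i)
    (hKv : ∀ i, toEuclideanLin (Kᴴ * K) (v i) = ((σ i ^ 2 : ℝ) : 𝕜) • v i)
    {c : ℝ} (hc : ∀ i, c ≤ σ i) :
    ∃ V : Submodule 𝕜 (EuclideanSpace 𝕜 (Fin (n + m))), Fintype.card ι ≤ finrank 𝕜 V ∧
      ∀ x ∈ V, c * ‖x‖ ^ 2 ≤ re ⟪x, toEuclideanLin (hermitianDilation K) x⟫_𝕜 := by
  let z : ι → EuclideanSpace 𝕜 (Fin (n + m)) := fun i =>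
    WithLp.toLp 2 (Fin.append ((σ i : 𝕜) • v i).ofLp (toEuclideanLin K (v i)).ofLp)
  have hz_inner (i l : ι) : ⟪z i, z l⟫_𝕜 = ((σ i * σ l + σ l ^ 2 : ℝ) : 𝕜) * ⟪v i, v l⟫_𝕜 := by
    rw [EuclideanSpace.inner_toLp_append, inner_smul_left, inner_smul_right,
      ← inner_toEuclideanLin_conjTranspose_mul_self, hKv, inner_smul_right, conj_ofReal]
    push_cast
    ring
  have hz : Pairwise fun i l => ⟪z i, z l⟫_𝕜 = 0 := fun i l hil => by
    simp only [hz_inner, hv.2 hil, mul_zero]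
  have hz0 (i : ι) : z i ≠ 0 := by
    have := hσ i
    rw [← inner_self_ne_zero (𝕜 := 𝕜), hz_inner, inner_self_eq_norm_sq_to_K, hv.1 i, ofReal_one,
      one_pow, mul_one, ofReal_ne_zero]
    positivity
  have hHz (i : ι) : toEuclideanLin (hermitianDilation K) (z i) = (σ i : 𝕜) • z i := by
    have hKv' : (Kᴴ * K) *ᵥ (v i).ofLp = (σ i : 𝕜) ^ 2 • (v i).ofLp := by
      simpa using congrArg WithLp.ofLp (hKv i)
    simp only [z, WithLp.ofLp_smul, toLpLin_apply, hermitianDilation_mulVec_append K hKv']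
    rfl
  refine ⟨Submodule.span 𝕜 (Set.range z), ?_,
    fun x hx => le_re_inner_map_self_of_mem_span hz hHz hc hx⟩
  rw [finrank_span_eq_card (linearIndependent_of_ne_zero_of_inner_eq_zero hz0 hz)]

theorem exists_submodule_sqrt_eigenvaluesDesc_le_re_inner_hermitianDilation
    (K : Matrix (Fin m) (Fin n) 𝕜) (j : Fin n)
    (hj : 0 < (isHermitian_conjTranspose_mul_self K).eigenvaluesDesc j) :
    ∃ V : Submodule 𝕜 (EuclideanSpace 𝕜 (Fin (n + m))), j.val + 1 ≤ finrank 𝕜 V ∧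
      ∀ x ∈ V, √((isHermitian_conjTranspose_mul_self K).eigenvaluesDesc j) * ‖x‖ ^ 2 ≤
        re ⟪x, toEuclideanLin (hermitianDilation K) x⟫_𝕜 := by
  set hG := isHermitian_conjTranspose_mul_self K
  let S : Finset (Fin n) := {p | hG.eigenvaluesDesc j ≤ hG.eigenvalues p}
  have hS (p : S) : hG.eigenvaluesDesc j ≤ hG.eigenvalues p := (mem_filter.mp p.2).2
  have hpos (p : S) : 0 < hG.eigenvalues p := hj.trans_le (hS p)
  obtain ⟨V, hV, hVH⟩ := exists_submodule_le_re_inner_hermitianDilation_of_orthonormal K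
    (v := fun p : S => hG.eigenvectorBasis p)
    (hG.eigenvectorBasis.orthonormal.comp _ Subtype.val_injective)
    (σ := fun p => √(hG.eigenvalues p)) (fun p => Real.sqrt_pos.mpr (hpos p))
    (fun p => by rw [Real.sq_sqrt (hpos p).le]; exact hG.toEuclideanLin_eigenvectorBasis p)
    (fun p => Real.sqrt_le_sqrt (hS p))
  have hcard : j.val + 1 ≤ #S := hG.le_card_filter_eigenvaluesDesc_le j
  exact ⟨V, hcard.trans (by simpa using hV), hVH⟩

end Matrix

theorem dsum_sub_hermitianDilation {n : ℕ} (A B : Matrix (Fin n) (Fin n) ℂ) :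
    dsum (Aᴴ * A + Bᴴ * B) (A * Aᴴ + B * Bᴴ) - hermitianDilation (A * B + B * A) =
      (reindex finSumFinEquiv finSumFinEquiv (fromBlocks A (-Bᴴ) B (-Aᴴ)))ᴴ *
        reindex finSumFinEquiv finSumFinEquiv (fromBlocks A (-Bᴴ) B (-Aᴴ)) := by
  rw [dsum, hermitianDilation, conjTranspose_reindex, ← coe_reindexAlgEquiv ℂ ℂ, ← map_sub,
    ← map_mul]
  congr 1
  rw [fromBlocks_conjTranspose, fromBlocks_multiply, sub_eq_add_neg, fromBlocks_neg,
    fromBlocks_add]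
  congr 1 <;> simp [add_comm]

theorem re_inner_hermitianDilation_le_re_inner_dsum {n : ℕ} (A B : Matrix (Fin n) (Fin n) ℂ)
    (x : EuclideanSpace ℂ (Fin (n + n))) :
    re ⟪x, toEuclideanLin (hermitianDilation (A * B + B * A)) x⟫_ℂ ≤
      re ⟪x, toEuclideanLin (dsum (Aᴴ * A + Bᴴ * B) (A * Aᴴ + B * Bᴴ)) x⟫_ℂ := by
  have h := congrArg re (inner_toEuclideanLin_conjTranspose_mul_self
    (reindex finSumFinEquiv finSumFinEquiv (fromBlocks A (-Bᴴ) B (-Aᴴ))) x x)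
  rw [← dsum_sub_hermitianDilation, map_sub, LinearMap.sub_apply, inner_sub_right, map_sub,
    inner_self_eq_norm_sq] at h
  linarith [sq_nonneg ‖toEuclideanLin (reindex finSumFinEquiv finSumFinEquiv
    (fromBlocks A (-Bᴴ) B (-Aᴴ))) x‖]

/-- Let `A`, `B` be `n×n` complex matrices. Then for every index `j`,
`s_j(AB + BA) ≤ s_j((AᴴA + BᴴB) ⊕ (AAᴴ + BBᴴ))`. -/
theorem stmt_17 {n : ℕ} (A B : Matrix (Fin n) (Fin n) ℂ) (j : Fin n) :
    singularValues (A * B + B * A) j ≤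
      singularValues (dsum (Aᴴ * A + Bᴴ * B) (A * Aᴴ + B * Bᴴ)) (Fin.castAdd n j) := by
  set K := A * B + B * A
  set M := dsum (Aᴴ * A + Bᴴ * B) (A * Aᴴ + B * Bᴴ)
  have hK := isHermitian_conjTranspose_mul_self K
  have hM := isHermitian_conjTranspose_mul_self M
  change √(hK.eigenvaluesDesc j) ≤ √(hM.eigenvaluesDesc (Fin.castAdd n j))
  refine Real.sqrt_le_sqrt ?_
  have hK0 : 0 ≤ hK.eigenvaluesDesc j :=
    (posSemidef_conjTranspose_mul_self K).eigenvalues_nonneg _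
  rcases hK0.eq_or_lt with h0 | hpos
  · rw [← h0]
    exact (posSemidef_conjTranspose_mul_self M).eigenvalues_nonneg _
  obtain ⟨V, hV, hVH⟩ :=
    exists_submodule_sqrt_eigenvaluesDesc_le_re_inner_hermitianDilation K j hpos
  refine hM.le_eigenvaluesDesc_of_le_re_inner _ hV fun x hx => ?_
  rw [inner_toEuclideanLin_conjTranspose_mul_self, inner_self_eq_norm_sq]
  have := sq_mul_norm_sq_le_norm_sq_of_mul_norm_sq_le_re_inner (Real.sqrt_nonneg _)
    ((hVH x hx).trans (re_inner_hermitianDilation_le_re_inner_dsum A B x))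
  rwa [Real.sq_sqrt hpos.le] at this
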